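/- arXiv:2310.03257 — 5 statements merged into one kernel-verified Lean document; each statement's English description precedes it below -/
import Mathlib

section
/- Let X be a Banach space having property (β_p) for some p > 1 with constant C_β > 0. Then X, equipped with its norm metric, satisfies the infrasup p-umbel inequality with constant C_U = C_β^{1/p}. -/
open scoped ENNReal

/-- A metric space `(X,d)` satisfies the infrasup `p`-umbel inequality with constant `C_U > 0`
if for every choice of points `w, z ∈ X` and every sequence `(x_n)` in `X` one has
`(1/2^p)·inf_n d(w,x_n)^p + (1/C_U^p)·inf_{i≠j} d(x_i,x_j)^p
  ≤ max { d(w,z)^p , sup_n d(x_n,z)^p }`.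
(The arithmetic is carried out in `ℝ≥0∞` so that the supremum is meaningful even when
the sequence is unbounded.) -/
def InfrasupUmbel (X : Type*) [PseudoMetricSpace X] (p C_U : ℝ) : Prop :=
  ∀ (w z : X) (x : ℕ → X),
    (1 / (2 : ℝ≥0∞) ^ p) * (⨅ n : ℕ, edist w (x n) ^ p)
      + (1 / ENNReal.ofReal C_U ^ p) * (⨅ (i : ℕ) (j : ℕ) (_ : i ≠ j), edist (x i) (x j) ^ p)
      ≤ max (edist w z ^ p) (⨆ n : ℕ, edist (x n) z ^ p)

private lemma rpow_le_base_aux {p c M : ℝ} (hp : 0 < p) (_hc : 0 ≤ c) (hM : 0 ≤ M)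
    (h : c ^ p ≤ M ^ p) : c ≤ M := by
  by_contra hcon
  push_neg at hcon
  exact absurd h (not_le.2 (Real.rpow_lt_rpow hM hcon hp))

/-- **Rolewicz implies Umbel.**  If a Banach space `X` has property `(β_p)` for some `p > 1`
with constant `C_β > 0`, then `X` (with its norm metric) satisfies the infrasup `p`-umbel
inequality with constant `C_U = C_β^{1/p}`. -/
theorem rolewicz_implies_umbel (X : Type*) [NormedAddCommGroup X] [NormedSpace ℝ X]
    [CompleteSpace X] (p Cβ : ℝ) (hp : 1 < p) (hCβ : 0 < Cβ)
    (hβ : ∀ t : ℝ, 0 < t → ∀ z : X, ‖z‖ ≤ 1 → ∀ x : ℕ → X, (∀ n, ‖x n‖ ≤ 1) →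
      (∀ i j : ℕ, i ≠ j → t ≤ ‖x i - x j‖) →
      ∃ i₀ : ℕ, ‖(1 / 2 : ℝ) • (z - x i₀)‖ ≤ 1 - t ^ p / Cβ) :
    InfrasupUmbel X p (Cβ ^ (1 / p)) := by
  intro w z x
  have hp0 : (0:ℝ) < p := lt_trans one_pos hp
  set RHS := max (edist w z ^ p) (⨆ n : ℕ, edist (x n) z ^ p) with hRHSdef
  by_cases htop : RHS = ⊤
  · rw [htop]; exact le_top
  have hedist : ∀ (a b : X), edist a b ^ p = ENNReal.ofReal (dist a b ^ p) := by
    intro a b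
    rw [edist_dist, ENNReal.ofReal_rpow_of_nonneg dist_nonneg hp0.le]
  set r := RHS.toReal with hr
  have hr0 : 0 ≤ r := ENNReal.toReal_nonneg
  set M := r ^ (1/p) with hMdef
  have hM0 : 0 ≤ M := Real.rpow_nonneg hr0 _
  have hMp : M ^ p = r := by
    rw [hMdef, ← Real.rpow_mul hr0, one_div, inv_mul_cancel₀ hp0.ne', Real.rpow_one]
  have hofr : ENNReal.ofReal r = RHS := ENNReal.ofReal_toReal htop
  have hb : ∀ a : X, edist a z ^ p ≤ RHS → dist a z ≤ M := by
    intro a h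
    have h2 : dist a z ^ p ≤ r := by
      have h3 := ENNReal.toReal_mono htop h
      rwa [hedist, ENNReal.toReal_ofReal (Real.rpow_nonneg dist_nonneg _)] at h3
    exact rpow_le_base_aux hp0 dist_nonneg hM0 (by rw [hMp]; exact h2)
  have hwz : dist w z ≤ M := hb w (le_max_left _ _)
  have hxz : ∀ n, dist (x n) z ≤ M := fun n =>
    hb (x n) (le_trans (le_iSup (fun n => edist (x n) z ^ p) n) (le_max_right _ _))
  rcases eq_or_lt_of_le hM0 with hM0' | hMpos
  · -- degenerate case: M = 0, all points coincide with z
    have hx0 : ∀ n, x n = z := fun n => dist_le_zero.mp ((hxz n).trans hM0'.ge)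
    have h1 : (⨅ n : ℕ, edist w (x n) ^ p) = 0 := by
      refine le_antisymm ?_ zero_le
      have h0 : edist w (x 0) ^ p = 0 := by
        rw [dist_le_zero.mp (hwz.trans hM0'.ge), hx0 0, edist_self,
          ENNReal.zero_rpow_of_pos hp0]
      exact h0 ▸ iInf_le _ 0
    have h2 : (⨅ (i : ℕ) (j : ℕ) (_ : i ≠ j), edist (x i) (x j) ^ p) = 0 := by
      refine le_antisymm ?_ zero_le
      have h01 : edist (x 0) (x 1) ^ p = 0 := by
        rw [hx0 0, hx0 1, edist_self, ENNReal.zero_rpow_of_pos hp0]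
      exact h01 ▸ iInf_le_of_le 0 (iInf_le_of_le 1 (iInf_le _ (by norm_num)))
    rw [h1, h2, mul_zero, mul_zero, add_zero]
    exact zero_le
  · -- main case: M > 0
    haveI : Nonempty {q : ℕ × ℕ // q.1 ≠ q.2} := ⟨⟨(0,1), by norm_num⟩⟩
    set f : {q : ℕ × ℕ // q.1 ≠ q.2} → ℝ := fun q => dist (x q.1.1) (x q.1.2) with hf
    have hfb : BddBelow (Set.range f) := ⟨0, by rintro _ ⟨q, rfl⟩; exact dist_nonneg⟩
    set s := ⨅ q, f q with hs
    have hs0 : 0 ≤ s := Real.iInf_nonneg fun q => dist_nonneg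
    have hsle : ∀ i j : ℕ, i ≠ j → s ≤ dist (x i) (x j) := fun i j hij =>
      ciInf_le hfb ⟨(i, j), hij⟩
    have hpair : (⨅ (i : ℕ) (j : ℕ) (_ : i ≠ j), edist (x i) (x j) ^ p)
        = ENNReal.ofReal (s ^ p) := by
      have e1 : (⨅ (i : ℕ) (j : ℕ) (_ : i ≠ j), edist (x i) (x j) ^ p)
          = ⨅ q : {q : ℕ × ℕ // q.1 ≠ q.2}, ENNReal.ofReal (f q ^ p) := by
        refine le_antisymm (le_iInf fun q => ?_)
          (le_iInf fun i => le_iInf fun j => le_iInf fun hij => ?_)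
        · exact iInf_le_of_le q.1.1 (iInf_le_of_le q.1.2
            (iInf_le_of_le q.2 (le_of_eq (hedist _ _))))
        · exact iInf_le_of_le ⟨(i, j), hij⟩ (le_of_eq (hedist _ _).symm)
      rw [e1, ← ENNReal.ofReal_iInf]
      congr 1
      have mono : Monotone (fun y : ℝ => max y 0 ^ p) := fun a b hab =>
        Real.rpow_le_rpow (le_max_right _ _) (max_le_max hab le_rfl) hp0.le
      have cont : ContinuousAt (fun y : ℝ => max y 0 ^ p) (⨅ q, f q) := by
        exact (Real.continuousAt_rpow_const _ _ (Or.inr hp0.le)).comp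
          ((continuous_id.max continuous_const).continuousAt)
      have hmap := Monotone.map_ciInf_of_continuousAt cont mono hfb
      calc (⨅ q, f q ^ p) = ⨅ q, max (f q) 0 ^ p :=
            iInf_congr fun q => by rw [max_eq_left dist_nonneg]
        _ = max (⨅ q, f q) 0 ^ p := hmap.symm
        _ = s ^ p := by rw [← hs, max_eq_left hs0]
    have h2p : ((2:ℝ≥0∞)) ^ p = ENNReal.ofReal ((2:ℝ) ^ p) := by
      rw [← ENNReal.ofReal_rpow_of_pos two_pos]
      norm_num
    have h2ne0 : ((2:ℝ≥0∞)) ^ p ≠ 0 :=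
      (ENNReal.rpow_pos (by norm_num) (by norm_num)).ne'
    have h2netop : ((2:ℝ≥0∞)) ^ p ≠ ⊤ :=
      ENNReal.rpow_ne_top_of_nonneg hp0.le (by norm_num)
    have hC : (1 / ENNReal.ofReal (Cβ ^ (1/p)) ^ p) = 1 / ENNReal.ofReal Cβ := by
      rw [ENNReal.ofReal_rpow_of_nonneg (Real.rpow_nonneg hCβ.le _) hp0.le,
        ← Real.rpow_mul hCβ.le, one_div p, inv_mul_cancel₀ hp0.ne', Real.rpow_one]
    rcases eq_or_lt_of_le hs0 with hs0' | hspos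
    · -- separation infimum is zero
      rw [hpair, ← hs0', Real.zero_rpow hp0.ne', ENNReal.ofReal_zero, mul_zero, add_zero]
      have hd : dist w (x 0) ≤ 2 * M := by
        have ht := dist_triangle w z (x 0)
        have h1 := hxz 0
        rw [dist_comm (x 0) z] at h1
        linarith
      calc (1/(2:ℝ≥0∞)^p) * ⨅ n, edist w (x n) ^ p
          ≤ (1/(2:ℝ≥0∞)^p) * ENNReal.ofReal ((2*M) ^ p) := by
            refine mul_le_mul_right ((iInf_le _ 0).trans ?_) _
            rw [hedist]
            exact ENNReal.ofReal_le_ofReal (Real.rpow_le_rpow dist_nonneg hd hp0.le)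
        _ = RHS := by
            rw [Real.mul_rpow (by norm_num) hM0,
              ENNReal.ofReal_mul (Real.rpow_nonneg (by norm_num) _), ← h2p, hMp, hofr,
              one_div, ← mul_assoc, ENNReal.inv_mul_cancel h2ne0 h2netop, one_mul]
    · -- separation infimum is positive: apply the β-property
      set t := s / M with htdef
      have ht : 0 < t := div_pos hspos hMpos
      have hinv0 : (0:ℝ) ≤ M⁻¹ := inv_nonneg.2 hM0
      have hz' : ‖M⁻¹ • (w - z)‖ ≤ 1 := by
        rw [norm_smul, Real.norm_eq_abs, abs_of_nonneg hinv0, ← dist_eq_norm]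
        calc M⁻¹ * dist w z ≤ M⁻¹ * M := mul_le_mul_of_nonneg_left hwz hinv0
          _ = 1 := inv_mul_cancel₀ hMpos.ne'
      have hx' : ∀ n, ‖M⁻¹ • (x n - z)‖ ≤ 1 := by
        intro n
        rw [norm_smul, Real.norm_eq_abs, abs_of_nonneg hinv0, ← dist_eq_norm]
        calc M⁻¹ * dist (x n) z ≤ M⁻¹ * M := mul_le_mul_of_nonneg_left (hxz n) hinv0
          _ = 1 := inv_mul_cancel₀ hMpos.ne'
      have hsep : ∀ i j : ℕ, i ≠ j →
          t ≤ ‖M⁻¹ • (x i - z) - M⁻¹ • (x j - z)‖ := by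
        intro i j hij
        rw [← smul_sub, sub_sub_sub_cancel_right, norm_smul, Real.norm_eq_abs,
          abs_of_nonneg hinv0, ← dist_eq_norm, htdef, div_eq_inv_mul]
        exact mul_le_mul_of_nonneg_left (hsle i j hij) hinv0
      obtain ⟨i₀, hi₀⟩ := hβ t ht _ hz' _ hx' hsep
      set a := t ^ p / Cβ with ha
      have ha0 : 0 ≤ a := div_nonneg (Real.rpow_nonneg ht.le _) hCβ.le
      have ha1 : a ≤ 1 := by
        have hn := (norm_nonneg _).trans hi₀
        linarith
      have hD : dist w (x i₀) ≤ 2 * M * (1 - a) := by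
        rw [← smul_sub, sub_sub_sub_cancel_right, smul_smul, norm_smul,
          Real.norm_eq_abs, abs_of_nonneg (by positivity : (0:ℝ) ≤ (1/2) * M⁻¹),
          ← dist_eq_norm] at hi₀
        have h5 := mul_le_mul_of_nonneg_left hi₀ (by positivity : (0:ℝ) ≤ 2 * M)
        calc dist w (x i₀) = 2 * M * (1/2 * M⁻¹ * dist w (x i₀)) := by
              field_simp
          _ ≤ 2 * M * (1 - a) := h5
      have h2pos : (0:ℝ) < 2 ^ p := Real.rpow_pos_of_pos two_pos _
      have hkey : dist w (x i₀) ^ p / 2 ^ p + s ^ p / Cβ ≤ r := by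
        have h1 : dist w (x i₀) ^ p ≤ (2 * M * (1 - a)) ^ p :=
          Real.rpow_le_rpow dist_nonneg hD hp0.le
        have h2 : (2 * M * (1 - a)) ^ p = 2 ^ p * M ^ p * (1 - a) ^ p := by
          rw [Real.mul_rpow (by positivity) (by linarith), Real.mul_rpow (by norm_num) hM0]
        have h3 : (1 - a) ^ p ≤ 1 - a := by
          rcases eq_or_lt_of_le (by linarith : (0:ℝ) ≤ 1 - a) with h | h
          · rw [← h, Real.zero_rpow hp0.ne']
          · calc (1-a) ^ p ≤ (1-a) ^ (1:ℝ) :=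
                Real.rpow_le_rpow_of_exponent_ge h (by linarith) hp.le
              _ = 1 - a := Real.rpow_one _
        have hMppos : (0:ℝ) < M ^ p := Real.rpow_pos_of_pos hMpos _
        have hta : M ^ p * a = s ^ p / Cβ := by
          rw [ha, htdef, Real.div_rpow hs0 hM0]
          field_simp
        have h4 : dist w (x i₀) ^ p / 2 ^ p ≤ M ^ p * (1 - a) := by
          rw [div_le_iff₀ h2pos]
          calc dist w (x i₀) ^ p ≤ 2 ^ p * M ^ p * (1 - a) ^ p := h2 ▸ h1
            _ ≤ 2 ^ p * M ^ p * (1 - a) :=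
                mul_le_mul_of_nonneg_left h3 (by positivity)
            _ = M ^ p * (1 - a) * 2 ^ p := by ring
        nlinarith [h4, hta, hMp]
      rw [hpair, hC]
      have e1 : (1/(2:ℝ≥0∞)^p) * ENNReal.ofReal (dist w (x i₀) ^ p)
          = ENNReal.ofReal (dist w (x i₀) ^ p / 2 ^ p) := by
        rw [ENNReal.ofReal_div_of_pos h2pos, ← h2p, one_div, div_eq_mul_inv, mul_comm]
      have e2 : 1 / ENNReal.ofReal Cβ * ENNReal.ofReal (s ^ p)
          = ENNReal.ofReal (s ^ p / Cβ) := by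
        rw [ENNReal.ofReal_div_of_pos hCβ, one_div, div_eq_mul_inv, mul_comm]
      calc (1/(2:ℝ≥0∞)^p) * (⨅ n, edist w (x n) ^ p)
            + 1 / ENNReal.ofReal Cβ * ENNReal.ofReal (s ^ p)
          ≤ (1/(2:ℝ≥0∞)^p) * ENNReal.ofReal (dist w (x i₀) ^ p)
            + 1 / ENNReal.ofReal Cβ * ENNReal.ofReal (s ^ p) := by
            gcongr
            exact (iInf_le _ i₀).trans (le_of_eq (hedist _ _))
        _ = ENNReal.ofReal (dist w (x i₀) ^ p / 2 ^ p + s ^ p / Cβ) := by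
            rw [e1, e2, ← ENNReal.ofReal_add (by positivity) (by positivity)]
        _ ≤ ENNReal.ofReal r := ENNReal.ofReal_le_ofReal hkey
        _ = RHS := hofr
end

section
/- Let (X,d) be a metric space satisfying the infrasup p-umbel inequality with constant C_U ≥ 1 for some p ≥ 1, and let {w, z, x₁, x₂, ...} be a vertical δ-umbel in X with parameter θ > 0 and δ ∈ (0,1). Then inf_{i≠j∈ℕ} d(x_i, x_j) ≤ 6·C_U·θ·δ^{1/p}. -/
open scoped ENNReal

/-- **Infrasup Umbel Inequality Lemma.**  If `(X,d)` satisfies the infrasup `p`-umbel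
inequality with constant `C_U ≥ 1` for some `p ≥ 1`, and `{w, z, x₁, x₂, ...}` is a vertical
`δ`-umbel in `X` with parameter `θ > 0` and `δ ∈ (0,1)`, then
`inf_{i ≠ j} d(x_i, x_j) ≤ 6·C_U·θ·δ^{1/p}`. -/
theorem infrasup_umbel_inequality_lemma (X : Type*) [MetricSpace X] (p C_U : ℝ)
    (hp : 1 ≤ p) (hCU : 1 ≤ C_U) (hX : InfrasupUmbel X p C_U)
    (w z : X) (x : ℕ → X) (θ δ : ℝ) (hθ : 0 < θ) (hδ : δ ∈ Set.Ioo (0 : ℝ) 1)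
    (hwz : θ ≤ dist w z ∧ dist w z ≤ (1 + δ) * θ)
    (hzx : ∀ i : ℕ, θ ≤ dist z (x i) ∧ dist z (x i) ≤ (1 + δ) * θ)
    (hwx : ∀ i : ℕ, 2 * θ ≤ dist w (x i) ∧ dist w (x i) ≤ 2 * (1 + δ) * θ) :
    (⨅ q : {q : ℕ × ℕ // q.1 ≠ q.2}, dist (x q.1.1) (x q.1.2))
      ≤ 6 * C_U * θ * δ ^ (1 / p) := by
  obtain ⟨hδ0, hδ1⟩ := hδ
  have hp0 : (0:ℝ) < p := by linarith
  have hCU0 : (0:ℝ) < C_U := by linarith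
  by_contra hcon
  push_neg at hcon
  set R : ℝ := 6 * C_U * θ * δ ^ (1 / p) with hRdef
  have hδp : (0:ℝ) < δ ^ (1/p) := Real.rpow_pos_of_pos hδ0 _
  have hR0 : 0 < R := by positivity
  have hbdd : BddBelow (Set.range fun q : {q : ℕ × ℕ // q.1 ≠ q.2} =>
      dist (x q.1.1) (x q.1.2)) := ⟨0, by rintro r ⟨q, rfl⟩; exact dist_nonneg⟩
  have hpair : ∀ i j : ℕ, i ≠ j → R ≤ dist (x i) (x j) := fun i j hij =>
    le_trans hcon.le (ciInf_le hbdd ⟨(i, j), hij⟩)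
  have h1 : ENNReal.ofReal ((2 * θ) ^ p) ≤ ⨅ n : ℕ, edist w (x n) ^ p := by
    refine le_iInf fun n => ?_
    rw [edist_dist, ← ENNReal.ofReal_rpow_of_nonneg (by positivity) hp0.le]
    exact ENNReal.rpow_le_rpow (ENNReal.ofReal_le_ofReal (hwx n).1) hp0.le
  have h2 : ENNReal.ofReal (R ^ p)
      ≤ ⨅ (i : ℕ) (j : ℕ) (_ : i ≠ j), edist (x i) (x j) ^ p := by
    refine le_iInf fun i => le_iInf fun j => le_iInf fun hij => ?_
    rw [edist_dist, ← ENNReal.ofReal_rpow_of_nonneg hR0.le hp0.le]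
    exact ENNReal.rpow_le_rpow (ENNReal.ofReal_le_ofReal (hpair i j hij)) hp0.le
  have h3 : edist w z ^ p ≤ ENNReal.ofReal (((1 + δ) * θ) ^ p) := by
    rw [edist_dist, ← ENNReal.ofReal_rpow_of_nonneg (by positivity) hp0.le]
    exact ENNReal.rpow_le_rpow (ENNReal.ofReal_le_ofReal hwz.2) hp0.le
  have h4 : (⨆ n : ℕ, edist (x n) z ^ p) ≤ ENNReal.ofReal (((1 + δ) * θ) ^ p) := by
    refine iSup_le fun n => ?_
    rw [edist_comm, edist_dist, ← ENNReal.ofReal_rpow_of_nonneg (by positivity) hp0.le]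
    exact ENNReal.rpow_le_rpow (ENNReal.ofReal_le_ofReal (hzx n).2) hp0.le
  have main : (1 / (2 : ℝ≥0∞) ^ p) * ENNReal.ofReal ((2 * θ) ^ p)
      + (1 / ENNReal.ofReal C_U ^ p) * ENNReal.ofReal (R ^ p)
      ≤ ENNReal.ofReal (((1 + δ) * θ) ^ p) :=
    le_trans (add_le_add (mul_le_mul_right h1 _) (mul_le_mul_right h2 _))
      (le_trans (hX w z x) (max_le h3 h4))
  have h2p : (0:ℝ) < 2 ^ p := by positivity
  have hCp : (0:ℝ) < C_U ^ p := by positivity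
  have hE2 : (1 / (2 : ℝ≥0∞) ^ p) = ENNReal.ofReal (1 / 2 ^ p) := by
    rw [one_div, one_div, ENNReal.ofReal_inv_of_pos h2p]
    congr 1
    rw [show (2 : ℝ≥0∞) = ENNReal.ofReal 2 by norm_num,
      ENNReal.ofReal_rpow_of_pos (by norm_num)]
  have hEC : (1 / ENNReal.ofReal C_U ^ p) = ENNReal.ofReal (1 / C_U ^ p) := by
    rw [one_div, one_div, ENNReal.ofReal_inv_of_pos hCp,
      ENNReal.ofReal_rpow_of_pos hCU0]
  rw [hE2, hEC, ← ENNReal.ofReal_mul (by positivity), ← ENNReal.ofReal_mul (by positivity),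
    ← ENNReal.ofReal_add (by positivity) (by positivity)] at main
  have hreal : 1 / 2 ^ p * (2 * θ) ^ p + 1 / C_U ^ p * R ^ p ≤ ((1 + δ) * θ) ^ p :=
    (ENNReal.ofReal_le_ofReal_iff (by positivity)).mp main
  -- simplify the real inequality
  have e1 : (2 * θ) ^ p = 2 ^ p * θ ^ p := Real.mul_rpow (by norm_num) hθ.le
  have e2 : R ^ p = 6 ^ p * C_U ^ p * θ ^ p * δ := by
    rw [hRdef, Real.mul_rpow (by positivity) hδp.le, Real.mul_rpow (by positivity) hθ.le,
      Real.mul_rpow (by norm_num) hCU0.le, ← Real.rpow_mul hδ0.le,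
      one_div_mul_cancel hp0.ne', Real.rpow_one]
  have e3 : ((1 + δ) * θ) ^ p = (1 + δ) ^ p * θ ^ p := Real.mul_rpow (by linarith) hθ.le
  rw [e1, e2, e3] at hreal
  have hθp : (0:ℝ) < θ ^ p := by positivity
  have hmain2 : 1 + 6 ^ p * δ ≤ (1 + δ) ^ p := by
    have h := hreal
    have : θ ^ p * (1 + 6 ^ p * δ) ≤ θ ^ p * (1 + δ) ^ p := by
      have hh1 : 1 / 2 ^ p * (2 ^ p * θ ^ p) = θ ^ p := by field_simp
      have hh2 : 1 / C_U ^ p * (6 ^ p * C_U ^ p * θ ^ p * δ) = 6 ^ p * θ ^ p * δ := by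
        field_simp
      nlinarith [hreal]
    exact le_of_mul_le_mul_left (by linarith [this]) hθp
  -- convexity bound: (1+δ)^p ≤ 1 + (2^p - 1) δ
  have hconv : (1 + δ) ^ p ≤ 1 + (2 ^ p - 1) * δ := by
    have hc := (convexOn_rpow hp).2 (Set.mem_Ici.mpr zero_le_one)
      (Set.mem_Ici.mpr (by norm_num : (0:ℝ) ≤ 2)) (by linarith : (0:ℝ) ≤ 1 - δ)
      hδ0.le (by ring)
    simp only [smul_eq_mul] at hc
    have hx : (1 - δ) * 1 + δ * 2 = 1 + δ := by ring
    rw [hx] at hc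
    calc (1 + δ) ^ p ≤ (1 - δ) * 1 ^ p + δ * 2 ^ p := hc
      _ = 1 + (2 ^ p - 1) * δ := by rw [Real.one_rpow]; ring
  have h26 : (2:ℝ) ^ p < 6 ^ p := Real.rpow_lt_rpow (by norm_num) (by norm_num) hp0
  nlinarith [hmain2, hconv, h26, hδ0]
end

section
/- Let h, c ∈ ℕ and let χ be a coloring of the set VP([ℕ]^{≤h}) of vertical vertex pairs of the countably branching tree of height h by c colors. Then there exists an infinite subset M ⊆ ℕ such that the restriction of χ to VP([M]^{≤h}) is horizontally monochromatic: whenever (m̄,n̄) and (j̄,k̄) are vertical pairs of tuples with all entries in M and the lengths satisfy |m̄| = |j̄| and |n̄| = |k̄|, then χ(m̄,n̄) = χ(j̄,k̄). -/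
lemma exists_chain_list (T : Set ℕ) (hT : T.Infinite) (k : ℕ) :
    ∃ l : List ℕ, l.Chain' (· < ·) ∧ l.length = k ∧ ∀ a ∈ l, a ∈ T := by
  have hT' : {x | (fun y => y ∈ T) x}.Infinite := hT
  refine ⟨(List.range k).map (Nat.nth (· ∈ T)), ?_, by simp, ?_⟩
  · change List.IsChain _ _; rw [List.isChain_iff_pairwise, List.pairwise_map]
    exact (List.pairwise_lt_range (n := k)).imp (fun hab => (Nat.nth_lt_nth hT').mpr hab)
  · intro a ha
    simp only [List.mem_map] at ha
    obtain ⟨b, _, rfl⟩ := ha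
    exact Nat.nth_mem_of_infinite hT' b

lemma ramsey_lists (κ : Type) [Finite κ] (k : ℕ) :
    ∀ (f : List ℕ → κ) (S : Set ℕ), S.Infinite →
      ∃ M, M ⊆ S ∧ M.Infinite ∧
        ∀ l1 l2 : List ℕ, l1.Chain' (· < ·) → l2.Chain' (· < ·) →
          l1.length = k → l2.length = k →
          (∀ a ∈ l1, a ∈ M) → (∀ a ∈ l2, a ∈ M) → f l1 = f l2 := by
  induction k with
  | zero =>
    intro f S hS
    refine ⟨S, le_refl _, hS, ?_⟩
    intro l1 l2 _ _ h1 h2 _ _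
    rw [List.length_eq_zero_iff] at h1 h2
    rw [h1, h2]
  | succ k IH =>
    intro f S hS
    -- step function
    have step : ∀ T : {T : Set ℕ // T.Infinite}, ∃ (a : ℕ) (T' : Set ℕ),
        T'.Infinite ∧ a ∈ T.1 ∧ T' ⊆ T.1 ∧ (∀ x ∈ T', a < x) ∧
        (∀ l1 l2 : List ℕ, l1.Chain' (· < ·) → l2.Chain' (· < ·) →
          l1.length = k → l2.length = k →
          (∀ x ∈ l1, x ∈ T') → (∀ x ∈ l2, x ∈ T') → f (a :: l1) = f (a :: l2)) := by
      rintro ⟨T, hT⟩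
      have hT' : {x | (fun y => y ∈ T) x}.Infinite := hT
      set a := Nat.nth (· ∈ T) 0 with ha
      have haT : a ∈ T := Nat.nth_mem_of_infinite hT' 0
      have hT2 : (T ∩ Set.Ioi a).Infinite := by
        have : T \ Set.Iic a = T ∩ Set.Ioi a := by
          rw [Set.diff_eq, Set.compl_Iic]
        rw [← this]
        exact hT.diff (Set.finite_Iic a)
      obtain ⟨M, hMsub, hMinf, hMprop⟩ := IH (fun l => f (a :: l)) (T ∩ Set.Ioi a) hT2
      exact ⟨a, M, hMinf, haT, fun x hx => (hMsub hx).1, fun x hx => (hMsub hx).2,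
        hMprop⟩
    choose g T' hInf hmem hsub hgt hprop using step
    -- sequence of sets
    let F : ℕ → {T : Set ℕ // T.Infinite} := fun n =>
      Nat.rec ⟨S, hS⟩ (fun _ prev => ⟨T' prev, hInf prev⟩) n
    have hFsucc : ∀ n, (F (n + 1)).1 = T' (F n) := fun n => rfl
    set a : ℕ → ℕ := fun n => g (F n) with ha
    have hsub' : ∀ n m, n ≤ m → (F m).1 ⊆ (F n).1 := by
      intro n m hnm
      induction m with
      | zero => rw [Nat.le_zero.mp hnm]
      | succ m IHm =>
        rcases Nat.lt_or_ge n (m+1) with h' | h'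
        · exact fun x hx => IHm (Nat.lt_succ_iff.mp h') (hsub (F m) hx)
        · rw [Nat.le_antisymm hnm h']
    have haF : ∀ n, a n ∈ (F n).1 := fun n => hmem (F n)
    have hamem : ∀ n m, n < m → a m ∈ (F (n+1)).1 := by
      intro n m hnm
      exact hsub' (n+1) m hnm (haF m)
    have hamono : StrictMono a := strictMono_nat_of_lt_succ (by
      intro n
      exact hgt (F n) _ (hamem n (n+1) (Nat.lt_succ_self n)))
    -- canonical k-list in F (n+1)
    have hcanon : ∀ n, ∃ l : List ℕ, l.Chain' (· < ·) ∧ l.length = k ∧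
        ∀ x ∈ l, x ∈ (F (n+1)).1 := fun n => exists_chain_list _ (F (n+1)).2 k
    choose L hLc hLl hLm using hcanon
    set col : ℕ → κ := fun n => f (a n :: L n) with hcol
    obtain ⟨v, hv⟩ := Finite.exists_infinite_fiber col
    rw [Set.infinite_coe_iff] at hv
    refine ⟨a '' (col ⁻¹' {v}), ?_, hv.image (hamono.injective.injOn), ?_⟩
    · rintro x ⟨n, _, rfl⟩
      exact hsub' 0 n (Nat.zero_le n) (haF n)
    · -- main property
      have key : ∀ l : List ℕ, l.Chain' (· < ·) → l.length = k + 1 →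
          (∀ x ∈ l, x ∈ a '' (col ⁻¹' {v})) → f l = v := by
        rintro (_ | ⟨x, r⟩) hc hl hm
        · simp at hl
        · obtain ⟨n, hnfib, rfl⟩ := hm x (List.mem_cons_self (a := x) (l := r))
          have hr : ∀ y ∈ r, y ∈ (F (n+1)).1 := by
            intro y hy
            obtain ⟨m, _, rfl⟩ := hm y (List.mem_cons_of_mem _ hy)
            have hxy : a n < a m := by
              change List.IsChain _ _ at hc; rw [List.isChain_iff_pairwise] at hc
              exact (List.pairwise_cons.mp hc).1 _ hy
            exact hamem n m (hamono.lt_iff_lt.mp hxy)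
          have hrc : r.Chain' (· < ·) := (List.isChain_cons.mp hc).2
          have hrl : r.length = k := by simpa using hl
          have : f (a n :: r) = f (a n :: L n) :=
            hprop (F n) r (L n) hrc (hLc n) hrl (hLl n) hr (hLm n)
          rw [this]
          exact hnfib
      intro l1 l2 hc1 hc2 hl1 hl2 hm1 hm2
      rw [key l1 hc1 hl1 hm1, key l2 hc2 hl2 hm2]

lemma le_foldr_max (n : List ℕ) : ∀ a ∈ n, a ≤ n.foldr max 0 := by
  induction n with
  | nil => simp
  | cons x r IH =>
    intro a ha
    rcases List.mem_cons.mp ha with rfl | ha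
    · simp [le_max_iff]
    · simp only [List.foldr_cons, le_max_iff]
      exact Or.inr (IH a ha)

lemma extend_chain (M : Set ℕ) (hM : M.Infinite) (n : List ℕ)
    (hc : n.Chain' (· < ·)) (hmem : ∀ a ∈ n, a ∈ M) (h : ℕ) (hlen : n.length ≤ h) :
    ∃ n' : List ℕ, n'.Chain' (· < ·) ∧ n'.length = h ∧ (∀ a ∈ n', a ∈ M) ∧
      n'.take n.length = n := by
  set B := n.foldr max 0 with hB
  have hT : (M ∩ Set.Ioi B).Infinite := by
    have : M \ Set.Iic B = M ∩ Set.Ioi B := by rw [Set.diff_eq, Set.compl_Iic]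
    rw [← this]; exact hM.diff (Set.finite_Iic B)
  obtain ⟨l, hlc, hll, hlm⟩ := exists_chain_list _ hT (h - n.length)
  refine ⟨n ++ l, ?_, by simp [hll]; omega, ?_, ?_⟩
  · change List.IsChain _ _; rw [List.isChain_append]
    refine ⟨hc, hlc, ?_⟩
    intro x hx y hy
    have hxn : x ∈ n := List.mem_of_mem_getLast? hx
    have hyl : y ∈ l := List.mem_of_mem_head? hy
    calc x ≤ B := le_foldr_max n x hxn
    _ < y := (hlm y hyl).2
  · intro a ha
    rcases List.mem_append.mp ha with ha | ha
    · exact hmem a ha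
    · exact (hlm a ha).1
  · exact List.take_left (l₁ := n) (l₂ := l)

/-- **Tree Vertex Pair Coloring Lemma.**
The countably branching tree of height `h` is encoded as the set of strictly increasing
lists of naturals of length at most `h` (the empty list being the root); a vertical pair
is a pair `(m, n)` with `m` a proper initial segment of `n`.  Given a coloring `χ` of the
vertical pairs by `c` colors, there is an infinite subset `M ⊆ ℕ` such that the coloring
restricted to vertical pairs of tuples with entries in `M` is horizontally monochromatic:
the color of a vertical pair depends only on the lengths (levels) of its two tuples. -/
theorem tree_coloring_lemma (h c : ℕ) (χ : List ℕ → List ℕ → Fin c) :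
    ∃ M : Set ℕ, M.Infinite ∧
      ∀ m n j k : List ℕ,
        List.Chain' (· < ·) m → List.Chain' (· < ·) n →
        List.Chain' (· < ·) j → List.Chain' (· < ·) k →
        (∀ a ∈ m, a ∈ M) → (∀ a ∈ n, a ∈ M) → (∀ a ∈ j, a ∈ M) → (∀ a ∈ k, a ∈ M) →
        m.length ≤ h → n.length ≤ h → j.length ≤ h → k.length ≤ h →
        m <+: n → m ≠ n → j <+: k → j ≠ k →
        m.length = j.length → n.length = k.length →
        χ m n = χ j k := by
  set g : List ℕ → (Fin (h+1) → Fin (h+1) → Fin c) :=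
    fun l i t => χ (l.take i.val) (l.take t.val) with hg
  obtain ⟨M, _, hMinf, hMprop⟩ := ramsey_lists _ h g Set.univ Set.infinite_univ
  refine ⟨M, hMinf, ?_⟩
  intro m n j k hcm hcn hcj hck hmm hmn hmj hmk hlm hln hlj hlk hpre hne hpre' hne'
    hlen1 hlen2
  -- m = n.take m.length, and m.length < n.length
  have hmtake : m = n.take m.length := List.prefix_iff_eq_take.mp hpre
  have hjtake : j = k.take j.length := List.prefix_iff_eq_take.mp hpre'
  have hlt : m.length < n.length := by
    rcases lt_or_eq_of_le hpre.length_le with h' | h'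
    · exact h'
    · exact absurd (List.prefix_iff_eq_take.mp hpre ▸ (h' ▸ List.take_length (l := n))) hne
  obtain ⟨n', hn'c, hn'l, hn'm, hn't⟩ := extend_chain M hMinf n hcn hmn h hln
  obtain ⟨k', hk'c, hk'l, hk'm, hk't⟩ := extend_chain M hMinf k hck hmk h hlk
  have hgeq : g n' = g k' :=
    hMprop n' k' hn'c hk'c hn'l hk'l (fun a ha => hn'm a ha) (fun a ha => hk'm a ha)
  have hi : m.length < h + 1 := by omega
  have ht : n.length < h + 1 := by omega
  have e1 : χ m n = g n' ⟨m.length, hi⟩ ⟨n.length, ht⟩ := by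
    simp only [hg]
    have h2 : n'.take n.length = n := hn't
    have h1 : n'.take m.length = m := by
      have e : n'.take m.length = (n'.take n.length).take m.length := by
        rw [List.take_take, min_eq_left hlt.le]
      rw [e, h2, ← hmtake]
    rw [h1, h2]
  have e2 : χ j k = g k' ⟨m.length, hi⟩ ⟨n.length, ht⟩ := by
    simp only [hg]
    have h2 : k'.take n.length = k := by rw [hlen2]; exact hk't
    have h1 : k'.take m.length = j := by
      have e : k'.take m.length = (k'.take n.length).take m.length := by
        rw [List.take_take, min_eq_left hlt.le]
      rw [e, h2, hlen1, ← hjtake]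
    rw [h1, h2]
  rw [e1, e2, hgeq]
end

section
/- Let X be a Banach space that is p-AMUC with constant C_M > 0 for some p > 1, and let D = {s, t, x₁, x₂, ...} be a vertical ε-diamond in X with parameter θ > 0 and ε ∈ (0,1). Then there exist indices i ≠ j ∈ ℕ such that ‖x_i − x_j‖ ≤ (64·4^{1/p}/C_M^{1/p})·ε^{1/p}·θ. -/
lemma exists_close_pair {E : Type*} [NormedAddCommGroup E] [NormedSpace ℝ E]
    [FiniteDimensional ℝ E] (u : ℕ → E) (C : ℝ) (hC : ∀ n, ‖u n‖ ≤ C)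
    {η : ℝ} (hη : 0 < η) : ∃ i j : ℕ, i ≠ j ∧ ‖u i - u j‖ < η := by
  obtain ⟨z, -, φ, hφ, hconv⟩ := tendsto_subseq_of_bounded
    (Metric.isBounded_closedBall (x := (0 : E)) (r := C))
    (fun n => Metric.mem_closedBall.2 (by simpa using hC n))
  rw [Metric.tendsto_atTop] at hconv
  obtain ⟨N, hN⟩ := hconv (η / 2) (by linarith)
  refine ⟨φ N, φ (N + 1), fun h => by simpa using hφ.injective h, ?_⟩
  have h1 := hN N le_rfl
  have h2 := hN (N + 1) (by omega)
  have : dist (u (φ N)) (u (φ (N + 1))) < η := by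
    calc dist (u (φ N)) (u (φ (N+1))) ≤ dist (u (φ N)) z + dist (u (φ (N+1))) z :=
      dist_triangle_right _ _ _
    _ < η := by simp only [Function.comp] at h1 h2; linarith
  simpa [dist_eq_norm] using this


/-- The modulus of asymptotic midpoint uniform convexity of a Banach space `X`:
`δ̃_X(ε) = inf_{x ∈ S_X} sup_Y inf_{y ∈ S_Y} max{‖x+εy‖, ‖x−εy‖} − 1`, where `Y` ranges
over closed subspaces of `X` of finite codimension. -/
noncomputable def amucModulus (X : Type*) [NormedAddCommGroup X] [NormedSpace ℝ X]
    (ε : ℝ) : ℝ :=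
  ⨅ x : {x : X // ‖x‖ = 1},
    ⨆ Y : {Y : Submodule ℝ X // IsClosed (Y : Set X) ∧ FiniteDimensional ℝ (X ⧸ Y)},
      ⨅ y : {y : X // y ∈ Y.1 ∧ ‖y‖ = 1},
        (max ‖x.1 + ε • y.1‖ ‖x.1 - ε • y.1‖ - 1)

set_option maxHeartbeats 2000000 in
/-- **`ε`-Diamond Lemma.**  Let `X` be `p`-AMUC with constant `C_M > 0` for some `p > 1`,
and let `{s, t, x₁, x₂, ...}` be a vertical `ε`-diamond in `X` with parameter `θ > 0` and
`ε ∈ (0,1)`.  Then there exist `i ≠ j` with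
`‖x_i − x_j‖ ≤ (64·4^{1/p}/C_M^{1/p})·ε^{1/p}·θ`. -/
theorem eps_diamond_lemma (X : Type*) [NormedAddCommGroup X] [NormedSpace ℝ X]
    [CompleteSpace X] (p C_M : ℝ) (hp : 1 < p) (hCM : 0 < C_M)
    (hAMUC : ∀ ε : ℝ, ε ∈ Set.Ioo (0 : ℝ) 1 → C_M * ε ^ p ≤ amucModulus X ε)
    (s t : X) (x : ℕ → X) (θ ε : ℝ) (hθ : 0 < θ) (hε : ε ∈ Set.Ioo (0 : ℝ) 1)
    (hst : 2 * θ ≤ ‖s - t‖ ∧ ‖s - t‖ ≤ 2 * (1 + ε) * θ)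
    (hsx : ∀ i : ℕ, θ ≤ ‖s - x i‖ ∧ ‖s - x i‖ ≤ (1 + ε) * θ)
    (hxt : ∀ i : ℕ, θ ≤ ‖x i - t‖ ∧ ‖x i - t‖ ≤ (1 + ε) * θ) :
    ∃ i j : ℕ, i ≠ j ∧
      ‖x i - x j‖ ≤ 64 * (4 : ℝ) ^ (1 / p) / C_M ^ (1 / p) * ε ^ (1 / p) * θ := by
  obtain ⟨hε0, hε1⟩ := hε
  obtain ⟨hst1, hst2⟩ := hst
  have hp0 : (0:ℝ) < p := lt_trans one_pos hp
  set R : ℝ := 64 * (4 : ℝ) ^ (1 / p) / C_M ^ (1 / p) * ε ^ (1 / p) * θ with hRdef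
  have hA0 : (0:ℝ) < (4 : ℝ) ^ (1 / p) / C_M ^ (1 / p) * ε ^ (1 / p) * θ := by positivity
  have hR0 : 0 < R := by rw [hRdef]; positivity
  by_contra hcon
  push_neg at hcon
  have hxx : ∀ i j : ℕ, ‖x i - x j‖ ≤ 2 * (1 + ε) * θ := by
    intro i j
    have h1 := (hsx i).2
    have h2 := (hsx j).2
    calc ‖x i - x j‖ = ‖(s - x j) - (s - x i)‖ := by congr 1; abel
    _ ≤ ‖s - x j‖ + ‖s - x i‖ := norm_sub_le _ _
    _ ≤ 2 * (1 + ε) * θ := by linarith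
  have h4θ : R < 4 * θ := by
    have := hcon 0 1 (by norm_num)
    have := hxx 0 1
    nlinarith
  set τ : ℝ := R / (8 * θ) with hτdef
  have hτ0 : 0 < τ := by positivity
  have hτ1 : τ < 1 := by rw [hτdef, div_lt_one (by linarith)]; linarith
  clear_value R τ
  set D : ℝ := ‖s - t‖ with hDdef
  have hD2 : 2 * θ ≤ D := hst1
  have hD0 : 0 < D := by linarith
  have hD4 : D ≤ 4 * θ := by nlinarith
  set u : X := D⁻¹ • (s - t) with hudef
  have hu : ‖u‖ = 1 := by
    rw [hudef, norm_smul, Real.norm_eq_abs, abs_of_pos (inv_pos.2 hD0), ← hDdef,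
      inv_mul_cancel₀ hD0.ne']
  clear_value D u
  have hmax1 : ∀ a : X, ‖a‖ = 1 → ∀ b : X, 1 ≤ max ‖a + τ • b‖ ‖a - τ • b‖ := by
    intro a ha b
    have h2 : ‖(a + τ • b) + (a - τ • b)‖ = 2 := by
      rw [show (a + τ • b) + (a - τ • b) = (2 : ℝ) • a by module, norm_smul, ha]
      norm_num
    have h3 := norm_add_le (a + τ • b) (a - τ • b)
    have h4 := le_max_left ‖a + τ • b‖ ‖a - τ • b‖
    have h5 := le_max_right ‖a + τ • b‖ ‖a - τ • b‖
    linarith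
  set η : ℝ := min (θ * ε) (R / 4) with hηdef
  have hη0 : 0 < η := lt_min (by positivity) (by positivity)
  have hηε : η ≤ θ * ε := min_le_left _ _
  have hηR : η ≤ R / 4 := min_le_right _ _
  clear_value η
  have key : amucModulus X τ ≤ 2 * ε := by
    refine le_trans (ciInf_le ⟨0, ?_⟩ ⟨u, hu⟩) ?_
    · rintro _ ⟨x', rfl⟩
      refine Real.iSup_nonneg fun Y => Real.iInf_nonneg fun y => ?_
      have := hmax1 x'.1 x'.2 y.1
      linarith
    · refine Real.iSup_le (fun Y => ?_) (by linarith)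
      obtain ⟨Yv, hYc, hYf⟩ := Y
      haveI : IsClosed (Yv : Set X) := hYc
      haveI : FiniteDimensional ℝ (X ⧸ Yv) := hYf
      have hbound : ∀ n : ℕ, ‖(Submodule.Quotient.mk (x n) : X ⧸ Yv)‖ ≤ ‖s‖ + 2 * θ := by
        intro n
        refine le_trans (Submodule.Quotient.norm_mk_le _ _) ?_
        have h1 := (hsx n).2
        calc ‖x n‖ = ‖s - (s - x n)‖ := by congr 1; abel
        _ ≤ ‖s‖ + ‖s - x n‖ := norm_sub_le _ _
        _ ≤ ‖s‖ + 2 * θ := by nlinarith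
      obtain ⟨i, j, hij, hclose⟩ :=
        exists_close_pair (fun n => (Submodule.Quotient.mk (x n) : X ⧸ Yv)) _ hbound hη0
      set w : X := x i - x j with hwdef
      have hmkw : ‖(Submodule.Quotient.mk w : X ⧸ Yv)‖ < η := by
        rw [hwdef, Submodule.Quotient.mk_sub]
        exact hclose
      obtain ⟨m, hm, hmn⟩ := Submodule.Quotient.norm_mk_lt
        (Submodule.Quotient.mk w : X ⧸ Yv) (sub_pos.2 hmkw)
      have hmη : ‖m‖ < η := by linarith
      set y0 : X := w - m with hy0def
      have hy0 : y0 ∈ Yv := by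
        rw [← Submodule.Quotient.mk_eq_zero, hy0def, Submodule.Quotient.mk_sub, hm, sub_self]
      have hwy0 : ‖w - y0‖ < η := by
        rw [hy0def, show w - (w - m) = m by abel]
        exact hmη
      have hwR : R < ‖w‖ := hcon i j hij
      clear_value w
      have hy0n : 3 * R / 4 < ‖y0‖ := by
        have := norm_sub_norm_le w y0
        have : R / 4 ≥ η := hηR
        nlinarith [norm_sub_norm_le w y0]
      have hy00 : 0 < ‖y0‖ := by linarith
      set y : X := ‖y0‖⁻¹ • y0 with hydef
      have hyY : y ∈ Yv := Yv.smul_mem _ hy0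
      have hy1 : ‖y‖ = 1 := by
        rw [hydef, norm_smul, Real.norm_eq_abs, abs_of_pos (inv_pos.2 hy00),
          inv_mul_cancel₀ hy00.ne']
      clear_value y0 y
      refine le_trans (ciInf_le ⟨0, ?_⟩ ⟨y, hyY, hy1⟩) ?_
      · rintro _ ⟨y', rfl⟩
        have := hmax1 u hu y'.1
        show (0:ℝ) ≤ max ‖u + τ • y'.1‖ ‖u - τ • y'.1‖ - 1
        linarith
      · -- main estimate
        show max ‖u + τ • y‖ ‖u - τ • y‖ - 1 ≤ 2 * ε
        set lam : ℝ := τ * D / ‖y0‖ with hlamdef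
        have hτD : τ * D ≤ R / 2 := by
          rw [hτdef]
          calc R / (8 * θ) * D ≤ R / (8 * θ) * (4 * θ) :=
                mul_le_mul_of_nonneg_left hD4 (by positivity)
          _ = R / 2 := by field_simp; ring
        have hlam0 : 0 < lam := by positivity
        have hlam1 : lam ≤ 1 := by
          rw [hlamdef, div_le_one hy00]
          linarith
        clear_value lam
        have hsmul : ∀ c : ℝ, |c| = 1 → ‖(s - t) + (c * lam) • y0‖ ≤ D + 3 * ε * θ := by
          intro c hc
          have hstw : ‖(s - t) + c • w‖ ≤ 2 * (1 + ε) * θ := by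
            rcases abs_eq (by norm_num : (0:ℝ) ≤ 1) |>.mp hc with h | h
            · rw [h, one_smul, show s - t + w = (s - x j) + (x i - t) by rw [hwdef]; abel]
              have := (hsx j).2; have := (hxt i).2
              calc ‖(s - x j) + (x i - t)‖ ≤ ‖s - x j‖ + ‖x i - t‖ := norm_add_le _ _
              _ ≤ 2 * (1 + ε) * θ := by linarith
            · rw [h, neg_one_smul, show s - t + -w = (s - x i) + (x j - t) by rw [hwdef]; abel]
              have := (hsx i).2; have := (hxt j).2
              calc ‖(s - x i) + (x j - t)‖ ≤ ‖s - x i‖ + ‖x j - t‖ := norm_add_le _ _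
              _ ≤ 2 * (1 + ε) * θ := by linarith
          have hsty0 : ‖(s - t) + c • y0‖ ≤ 2 * (1 + ε) * θ + η := by
            calc ‖(s - t) + c • y0‖ = ‖((s - t) + c • w) + c • (y0 - w)‖ := by
                  congr 1; rw [smul_sub]; abel
            _ ≤ ‖(s - t) + c • w‖ + ‖c • (y0 - w)‖ := norm_add_le _ _
            _ ≤ 2 * (1 + ε) * θ + η := by
                refine add_le_add hstw ?_
                rw [norm_smul, Real.norm_eq_abs, hc, one_mul, norm_sub_rev]
                exact hwy0.le
          have hconv : (s - t) + (c * lam) • y0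
              = (1 - lam) • (s - t) + lam • ((s - t) + c • y0) := by
            rw [smul_add, smul_smul]
            module
          calc ‖(s - t) + (c * lam) • y0‖
              ≤ ‖(1 - lam) • (s - t)‖ + ‖lam • ((s - t) + c • y0)‖ := by
                rw [hconv]; exact norm_add_le _ _
          _ = (1 - lam) * D + lam * ‖(s - t) + c • y0‖ := by
                rw [norm_smul, norm_smul, Real.norm_eq_abs, Real.norm_eq_abs,
                  abs_of_nonneg (by linarith), abs_of_pos hlam0, hDdef]
          _ ≤ (1 - lam) * D + lam * (2 * (1 + ε) * θ + η) :=
                add_le_add (le_refl _) (mul_le_mul_of_nonneg_left hsty0 hlam0.le)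
          _ ≤ D + 3 * ε * θ := by
                have hAle : 2 * (1 + ε) * θ + η - D ≤ 3 * ε * θ := by linarith
                have hh1 : lam * (2 * (1 + ε) * θ + η - D) ≤ lam * (3 * ε * θ) :=
                  mul_le_mul_of_nonneg_left hAle hlam0.le
                have hh2 : lam * (3 * ε * θ) ≤ 1 * (3 * ε * θ) :=
                  mul_le_mul_of_nonneg_right hlam1 (by positivity)
                rw [one_mul] at hh2
                nlinarith [hh1, hh2]
        have hplus : ‖u + τ • y‖ ≤ 1 + 2 * ε := by
          have heq : u + τ • y = D⁻¹ • ((s - t) + (1 * lam) • y0) := by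
            rw [hudef, hydef, hlamdef, smul_add, smul_smul, smul_smul]
            congr 2
            field_simp
          rw [heq, norm_smul, Real.norm_eq_abs, abs_of_pos (inv_pos.2 hD0)]
          have := hsmul 1 (by norm_num)
          rw [inv_mul_le_iff₀ hD0]
          nlinarith [mul_pos hε0 hθ]
        have hminus : ‖u - τ • y‖ ≤ 1 + 2 * ε := by
          have heq : u - τ • y = D⁻¹ • ((s - t) + ((-1) * lam) • y0) := by
            rw [hudef, hydef, hlamdef, smul_add, smul_smul, smul_smul]
            rw [sub_eq_add_neg]
            congr 1
            rw [← neg_smul]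
            congr 1
            field_simp
          rw [heq, norm_smul, Real.norm_eq_abs, abs_of_pos (inv_pos.2 hD0)]
          have := hsmul (-1) (by norm_num)
          rw [inv_mul_le_iff₀ hD0]
          nlinarith [mul_pos hε0 hθ]
        have := max_le hplus hminus
        linarith
  have h1 : C_M * τ ^ p ≤ 2 * ε := le_trans (hAMUC τ ⟨hτ0, hτ1⟩) key
  have h2 : τ ^ p ≤ 2 * ε / C_M := by
    rw [le_div_iff₀ hCM]; linarith
  have h3 : τ ≤ (2 * ε / C_M) ^ (1 / p) := by
    have := Real.rpow_le_rpow (Real.rpow_nonneg hτ0.le p) h2 (by positivity : (0:ℝ) ≤ 1/p)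
    rwa [← Real.rpow_mul hτ0.le, mul_one_div, div_self hp0.ne',
      Real.rpow_one] at this
  -- final contradiction
  have h4 : (2 * ε / C_M) ^ (1 / p) = 2 ^ (1/p) * (ε ^ (1/p) / C_M ^ (1/p)) := by
    rw [Real.div_rpow (by positivity) hCM.le, Real.mul_rpow (by norm_num) hε0.le]
    ring
  have h5 : (2:ℝ) ^ (1/p) ≤ (4:ℝ) ^ (1/p) :=
    Real.rpow_le_rpow (by norm_num) (by norm_num) (by positivity)
  have h6 : R ≤ 8 * θ * ((2 * ε / C_M) ^ (1 / p)) := by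
    rw [hτdef] at h3
    rw [div_le_iff₀ (by linarith : (0:ℝ) < 8 * θ)] at h3
    linarith
  have h7 : R ≤ 8 * (4:ℝ) ^ (1/p) / C_M ^ (1/p) * ε ^ (1/p) * θ := by
    rw [h4] at h6
    have hB : (0:ℝ) < ε ^ (1/p) / C_M ^ (1/p) := by positivity
    calc R ≤ 8 * θ * (2 ^ (1/p) * (ε ^ (1/p) / C_M ^ (1/p))) := h6
    _ ≤ 8 * θ * ((4:ℝ) ^ (1/p) * (ε ^ (1/p) / C_M ^ (1/p))) :=
      mul_le_mul_of_nonneg_left (mul_le_mul_of_nonneg_right h5 hB.le) (by linarith)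
    _ = 8 * (4:ℝ) ^ (1/p) / C_M ^ (1/p) * ε ^ (1/p) * θ := by ring
  have : 64 * (4 : ℝ) ^ (1 / p) / C_M ^ (1 / p) * ε ^ (1 / p) * θ
      ≤ 8 * (4:ℝ) ^ (1/p) / C_M ^ (1/p) * ε ^ (1/p) * θ := by rw [hRdef] at h7; exact h7
  have e1 : 64 * (4 : ℝ) ^ (1 / p) / C_M ^ (1 / p) * ε ^ (1 / p) * θ
      = 64 * ((4:ℝ) ^ (1/p) / C_M ^ (1/p) * ε ^ (1/p) * θ) := by ring
  have e2 : 8 * (4 : ℝ) ^ (1 / p) / C_M ^ (1 / p) * ε ^ (1 / p) * θ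
      = 8 * ((4:ℝ) ^ (1/p) / C_M ^ (1/p) * ε ^ (1/p) * θ) := by ring
  rw [e1, e2] at this
  linarith
end

section
/- Let c, n ∈ ℕ and color the set VP(D_n^ω) of vertical vertex pairs of the n-th countably branching diamond by c colors. Then there exists a subgraph 𝔇 of D_n^ω that is graph isomorphic to D_n^ω such that for every j with 0 ≤ j ≤ n−1, every 2^j-scaled copy of D_1^ω contained in 𝔇 is horizontally monochromatic: whenever (a,b) and (x,y) are vertical pairs of vertices of that scaled copy with d(a, s(D_n^ω)) = d(x, s(D_n^ω)) and d(b, s(D_n^ω)) = d(y, s(D_n^ω)), they receive the same color. -/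
/-- Index type for the edges of the `n`-th countably branching diamond `D_n^ω`. -/
def DEdge : ℕ → Type
  | 0 => Unit
  | n + 1 => DEdge n × ℕ × Bool

/-- Vertex set of the `n`-th countably branching diamond `D_n^ω`:
`D_0` is a single edge with the two vertices `s, t`; `D_{n+1}` is obtained from `D_n` by
replacing every edge with a copy of `D_1^ω`, which adds a countable family of branch
vertices for each edge. -/
def DVert : ℕ → Type
  | 0 => Bool
  | n + 1 => DVert n ⊕ (DEdge n × ℕ)

/-- Endpoints (source, target) of an edge of `D_n^ω`. -/
def dEnds : (n : ℕ) → DEdge n → DVert n × DVert n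
  | 0, _ => (false, true)
  | n + 1, (e, k, b) =>
      if b then (Sum.inr (e, k), Sum.inl (dEnds n e).2)
      else (Sum.inl (dEnds n e).1, Sum.inr (e, k))

/-- The graph `D_n^ω`. -/
def diamondGraph (n : ℕ) : SimpleGraph (DVert n) :=
  SimpleGraph.fromRel (fun u v => ∃ e : DEdge n, dEnds n e = (u, v))

/-- The distinguished vertex `s` of `D_n^ω`. -/
def sVert : (n : ℕ) → DVert n
  | 0 => false
  | n + 1 => Sum.inl (sVert n)

/-- The distinguished vertex `t` of `D_n^ω`. -/
def tVert : (n : ℕ) → DVert n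
  | 0 => true
  | n + 1 => Sum.inl (tVert n)

/-- Embedding of the vertices of the top `m` levels into `D_{m+k}^ω` (repeated `Sum.inl`). -/
def dEmb (m : ℕ) : (k : ℕ) → DVert m → DVert (m + k)
  | 0, v => v
  | k + 1, v => Sum.inl (dEmb m k v)

/-- Transport of vertices along an equality of indices. -/
def dCast {a b : ℕ} (h : a = b) (v : DVert a) : DVert b := h ▸ v

/-- The `s` vertex of the `2^j`-scaled copy of `D_1^ω` in `D_{m+1+j}^ω` determined by an
edge `e` of `D_m^ω` (via the factorization `D_{m+1+j}^ω = D_m^ω ⧸ D_1^ω ⧸ D_j^ω`). -/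
def copyS (m j : ℕ) (e : DEdge m) : DVert (m + 1 + j) :=
  dEmb (m + 1) j (Sum.inl (dEnds m e).1)

/-- The `t` vertex of the `2^j`-scaled copy of `D_1^ω` determined by `e`. -/
def copyT (m j : ℕ) (e : DEdge m) : DVert (m + 1 + j) :=
  dEmb (m + 1) j (Sum.inl (dEnds m e).2)

/-- The `k`-th branch vertex of the `2^j`-scaled copy of `D_1^ω` determined by `e`. -/
def copyX (m j : ℕ) (e : DEdge m) (k : ℕ) : DVert (m + 1 + j) :=
  dEmb (m + 1) j (Sum.inr (e, k))

/-- The level of a vertex of `D_n^ω`: its graph distance to the vertex `s`. -/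
noncomputable def level (n : ℕ) (v : DVert n) : ℕ := (diamondGraph n).dist (sVert n) v

/-- `(a, b)` is a vertical pair of `D_n^ω`: `a` and `b` lie on a common simple `st`-path
(equivalently, `d(s,a) + d(a,b) + d(b,t) = d(s,t) = 2^n`, since every simple `st`-path of
`D_n^ω` is a geodesic) and `d(a,s) < d(b,s)`. -/
noncomputable def VP (n : ℕ) (a b : DVert n) : Prop :=
  level n a < level n b ∧
    level n a + (diamondGraph n).dist a b + (diamondGraph n).dist b (tVert n) = 2 ^ n

/-- The vertex set of the `2^j`-scaled copy of `D_1^ω` in `D_n = D_{m+1+j}` determined by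
an edge `e` of `D_m^ω`, with branch vertices restricted along `ψ : ℕ → ℕ`. -/
def copySet {n : ℕ} (m j : ℕ) (hmn : m + 1 + j = n) (e : DEdge m) (ψ : ℕ → ℕ) :
    Set (DVert n) :=
  {w | w = dCast hmn (copyS m j e) ∨ w = dCast hmn (copyT m j e) ∨
    ∃ k : ℕ, w = dCast hmn (copyX m j e (ψ k))}

def height : (i : ℕ) → DVert i → ℕ
  | 0, v => cond v 1 0
  | i+1, Sum.inl v => 2 * height i v
  | i+1, Sum.inr (e, _) => 2 * height i (dEnds i e).1 + 1

lemma height_ends (i : ℕ) (e : DEdge i) :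
    height i (dEnds i e).2 = height i (dEnds i e).1 + 1 := by
  induction i with
  | zero => rfl
  | succ i ih =>
    obtain ⟨e, k, b⟩ := e
    cases b <;> simp [dEnds, height, ih e] <;> ring

lemma height_adj {i : ℕ} {u v : DVert i} (h : (diamondGraph i).Adj u v) :
    height i v = height i u + 1 ∨ height i u = height i v + 1 := by
  rw [diamondGraph, SimpleGraph.fromRel_adj] at h
  obtain ⟨-, ⟨e, he⟩ | ⟨e, he⟩⟩ := h
  · left
    have := height_ends i e
    rw [he] at this; exact this
  · right
    have := height_ends i e
    rw [he] at this; exact this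

lemma height_le_walk {i : ℕ} {u v : DVert i} (p : (diamondGraph i).Walk u v) :
    height i v ≤ height i u + p.length ∧ height i u ≤ height i v + p.length := by
  induction p with
  | nil => simp
  | cons h p ih =>
    obtain ⟨ih1, ih2⟩ := ih
    rcases height_adj h with h' | h' <;> constructor <;> simp [SimpleGraph.Walk.length_cons] <;> omega

lemma adj_of_ends {i : ℕ} {u v : DVert i} (e : DEdge i) (he : dEnds i e = (u, v)) :
    (diamondGraph i).Adj u v := by
  rw [diamondGraph, SimpleGraph.fromRel_adj]
  refine ⟨?_, Or.inl ⟨e, he⟩⟩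
  have h1 : (dEnds i e).1 = u := by rw [he]
  have h2 : (dEnds i e).2 = v := by rw [he]
  have := height_ends i e
  rw [h1, h2] at this
  intro h'
  rw [h'] at this
  omega

lemma adj_lift {i : ℕ} {u v : DVert i} (h : (diamondGraph i).Adj u v) :
    ∃ x : DVert (i+1), (diamondGraph (i+1)).Adj (Sum.inl u) x ∧
      (diamondGraph (i+1)).Adj x (Sum.inl v) := by
  rw [diamondGraph, SimpleGraph.fromRel_adj] at h
  obtain ⟨-, ⟨e, he⟩ | ⟨e, he⟩⟩ := h
  · refine ⟨Sum.inr (e, 0), adj_of_ends (e, 0, false) ?_, adj_of_ends (e, 0, true) ?_⟩ <;>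
      simp [dEnds, he]
  · refine ⟨Sum.inr (e, 0), (adj_of_ends (i := i+1) (e, 0, true) ?_).symm, ((adj_of_ends (i := i+1) (e, 0, false)) ?_).symm⟩ <;>
      simp [dEnds, he]

lemma walk_double {i : ℕ} {u v : DVert i} (p : (diamondGraph i).Walk u v) :
    ∃ q : (diamondGraph (i+1)).Walk (Sum.inl u) (Sum.inl v), q.length = 2 * p.length := by
  induction p with
  | nil => exact ⟨.nil, rfl⟩
  | cons h p ih =>
    obtain ⟨q, hq⟩ := ih
    obtain ⟨x, h1, h2⟩ := adj_lift h
    exact ⟨.cons h1 (.cons h2 q), by show q.length + 1 + 1 = 2 * (p.length + 1); omega⟩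

lemma exists_walk_height : ∀ (i : ℕ) (v : DVert i),
    ∃ p : (diamondGraph i).Walk (sVert i) v, p.length = height i v := by
  intro i
  induction i with
  | zero =>
    intro v
    cases v with
    | false => exact ⟨.nil, rfl⟩
    | true => exact ⟨.cons (adj_of_ends () rfl) .nil, rfl⟩
  | succ i ih =>
    rintro (w | ⟨e, k⟩)
    · obtain ⟨p, hp⟩ := ih w
      obtain ⟨q, hq⟩ := walk_double p
      exact ⟨q, by show q.length = 2 * height i w; omega⟩
    · obtain ⟨p, hp⟩ := ih (dEnds i e).1
      obtain ⟨q, hq⟩ := walk_double p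
      refine ⟨q.concat (adj_of_ends (e, k, false) (by simp [dEnds])), ?_⟩
      show (q.concat _).length = 2 * height i (dEnds i e).1 + 1
      have hc := SimpleGraph.Walk.length_concat q (adj_of_ends (e, k, false) (by rfl))
      refine hc.trans ?_; omega

lemma height_sVert : ∀ i, height i (sVert i) = 0
  | 0 => rfl
  | i + 1 => by simp [sVert, height, height_sVert i]

lemma level_eq_height (i : ℕ) (v : DVert i) : level i v = height i v := by
  obtain ⟨p, hp⟩ := exists_walk_height i v
  refine le_antisymm (hp ▸ SimpleGraph.dist_le p) ?_
  obtain ⟨q, hq⟩ := (SimpleGraph.Reachable.exists_walk_length_eq_dist ⟨p⟩ :)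
  have := (height_le_walk q).1
  rw [hq, height_sVert] at this
  simpa [level] using this

lemma height_dEmb (m : ℕ) : ∀ (k : ℕ) (v : DVert m),
    height (m + k) (dEmb m k v) = 2 ^ k * height m v
  | 0, v => by simp [dEmb]
  | k + 1, v => by
    show 2 * height (m + k) (dEmb m k v) = 2 ^ (k+1) * height m v
    rw [height_dEmb m k v]; ring

section Construction

variable (n c : ℕ) (χ : DVert n → DVert n → Fin c)

lemma exists_alpha (F : ℕ → Fin c × Fin c) :
    ∃ α : ℕ → ℕ, Function.Injective α ∧ ∀ k1 k2, F (α k1) = F (α k2) := by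
  obtain ⟨y, hy⟩ := Finite.exists_infinite_fiber F
  have hinf : (F ⁻¹' {y}).Infinite := Set.infinite_coe_iff.mp hy
  let emb := hinf.natEmbedding
  refine ⟨fun k => (emb k).1,
    fun a b hab => emb.injective (Subtype.ext hab), fun k1 k2 => ?_⟩
  have h1 := (emb k1).2
  have h2 := (emb k2).2
  simp only [Set.mem_preimage, Set.mem_singleton_iff] at h1 h2
  rw [h1, h2]

noncomputable def colorPair (m : ℕ) (e : DEdge m) (h : m + 1 + (n - m - 1) = n) (k : ℕ) :
    Fin c × Fin c :=
  (χ (dCast h (dEmb (m+1) (n-m-1) (Sum.inl (dEnds m e).1)))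
     (dCast h (dEmb (m+1) (n-m-1) (Sum.inr (e, k)))),
   χ (dCast h (dEmb (m+1) (n-m-1) (Sum.inr (e, k))))
     (dCast h (dEmb (m+1) (n-m-1) (Sum.inl (dEnds m e).2))))

noncomputable def alpha (m : ℕ) (e : DEdge m) : ℕ → ℕ :=
  if h : m + 1 + (n - m - 1) = n then
    Classical.choose (exists_alpha c (colorPair n c χ m e h))
  else id

lemma alpha_inj (m : ℕ) (e : DEdge m) : Function.Injective (alpha n c χ m e) := by
  unfold alpha
  split
  · exact (Classical.choose_spec (exists_alpha c (colorPair n c χ m e _))).1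
  · exact fun a b h => h

lemma alpha_const (m : ℕ) (e : DEdge m) (h : m + 1 + (n - m - 1) = n) (k1 k2 : ℕ) :
    colorPair n c χ m e h (alpha n c χ m e k1) = colorPair n c χ m e h (alpha n c χ m e k2) := by
  unfold alpha
  rw [dif_pos h]
  exact (Classical.choose_spec (exists_alpha c (colorPair n c χ m e h))).2 k1 k2

noncomputable def fg : (i : ℕ) → (DVert i → DVert i) × (DEdge i → DEdge i)
  | 0 => (id, id)
  | i + 1 =>
    (Sum.elim (fun w => Sum.inl ((fg i).1 w))
       (fun ek => Sum.inr ((fg i).2 ek.1, alpha n c χ i ((fg i).2 ek.1) ek.2)),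
     fun e => ((fg i).2 e.1, alpha n c χ i ((fg i).2 e.1) e.2.1, e.2.2))

lemma fg_ends : ∀ (i : ℕ) (e : DEdge i),
    dEnds i ((fg n c χ i).2 e) = ((fg n c χ i).1 (dEnds i e).1, (fg n c χ i).1 (dEnds i e).2)
  | 0, e => rfl
  | i + 1, (e, k, b) => by
    cases b <;> simp [fg, dEnds, fg_ends i e] <;> rfl

lemma fg_inj : ∀ i : ℕ, Function.Injective (fg n c χ i).1 ∧ Function.Injective (fg n c χ i).2
  | 0 => ⟨fun a b h => h, fun a b h => h⟩
  | i + 1 => by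
    obtain ⟨hf, hg⟩ := fg_inj i
    constructor
    · rintro (w1 | ⟨e1, k1⟩) (w2 | ⟨e2, k2⟩) h
      · exact congrArg Sum.inl (hf (Sum.inl_injective h))
      · exact (Sum.inl_ne_inr h).elim
      · exact (Sum.inr_ne_inl h).elim
      · have h' : ((fg n c χ i).2 e1, alpha n c χ i ((fg n c χ i).2 e1) k1)
            = ((fg n c χ i).2 e2, alpha n c χ i ((fg n c χ i).2 e2) k2) := Sum.inr_injective h
        have h1 : (fg n c χ i).2 e1 = (fg n c χ i).2 e2 := congrArg Prod.fst h'
        obtain rfl := hg h1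
        have h2 : alpha n c χ i ((fg n c χ i).2 e1) k1
            = alpha n c χ i ((fg n c χ i).2 e1) k2 := congrArg Prod.snd h'
        obtain rfl := alpha_inj n c χ i _ h2
        rfl
    · rintro ⟨e1, k1, b1⟩ ⟨e2, k2, b2⟩ h
      have h1 : (fg n c χ i).2 e1 = (fg n c χ i).2 e2 := congrArg Prod.fst h
      obtain rfl := hg h1
      have h2 : alpha n c χ i ((fg n c χ i).2 e1) k1
          = alpha n c χ i ((fg n c χ i).2 e1) k2 := congrArg (fun x => x.2.1) h
      obtain rfl := alpha_inj n c χ i _ h2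
      have h3 : b1 = b2 := congrArg (fun x => x.2.2) h
      rw [h3]

end Construction

section Construction2

variable (n c : ℕ) (χ : DVert n → DVert n → Fin c)

lemma fg_reflect (i : ℕ) (u v : DVert i) (e' : DEdge i)
    (h : dEnds i e' = ((fg n c χ i).1 u, (fg n c χ i).1 v)) :
    ∃ e : DEdge i, dEnds i e = (u, v) := by
  cases i with
  | zero => exact ⟨e', h⟩
  | succ i =>
    obtain ⟨hf, hg⟩ := fg_inj n c χ i
    obtain ⟨e0, k, b⟩ := e'
    cases b
    · -- ends = (Sum.inl (dEnds i e0).1, Sum.inr (e0, k))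
      have h1 : Sum.inl (dEnds i e0).1 = (fg n c χ (i+1)).1 u := by
        have := congrArg Prod.fst h
        simp [dEnds] at this; exact this
      have h2 : Sum.inr (e0, k) = (fg n c χ (i+1)).1 v := by
        have := congrArg Prod.snd h
        simp [dEnds] at this; exact this
      rcases u with u1 | ⟨eu, ku⟩
      · rcases v with v1 | ⟨ev, kv⟩
        · exact (Sum.inr_ne_inl (h2.trans rfl)).elim
        · have he0 : e0 = (fg n c χ i).2 ev := congrArg Prod.fst (Sum.inr_injective h2)
          have hu1 : (dEnds i e0).1 = (fg n c χ i).1 u1 := Sum.inl_injective h1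
          refine ⟨(ev, kv, false), ?_⟩
          have : (dEnds i ev).1 = u1 := by
            apply hf
            rw [← hu1, he0, fg_ends]
          simp [dEnds, this]
      · exact (Sum.inl_ne_inr (h1.trans rfl)).elim
    · -- ends = (Sum.inr (e0, k), Sum.inl (dEnds i e0).2)
      have h1 : Sum.inr (e0, k) = (fg n c χ (i+1)).1 u := by
        have := congrArg Prod.fst h
        simp [dEnds] at this; exact this
      have h2 : Sum.inl (dEnds i e0).2 = (fg n c χ (i+1)).1 v := by
        have := congrArg Prod.snd h
        simp [dEnds] at this; exact this
      rcases u with u1 | ⟨eu, ku⟩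
      · exact (Sum.inr_ne_inl (h1.trans rfl)).elim
      · rcases v with v1 | ⟨ev, kv⟩
        · have he0 : e0 = (fg n c χ i).2 eu := congrArg Prod.fst (Sum.inr_injective h1)
          have hv1 : (dEnds i e0).2 = (fg n c χ i).1 v1 := Sum.inl_injective h2
          refine ⟨(eu, ku, true), ?_⟩
          have : (dEnds i eu).2 = v1 := by
            apply hf
            rw [← hv1, he0, fg_ends]
          simp [dEnds, this]
        · exact (Sum.inl_ne_inr (h2.trans rfl)).elim

lemma fg_adj (i : ℕ) (u v : DVert i) :
    (diamondGraph i).Adj u v ↔ (diamondGraph i).Adj ((fg n c χ i).1 u) ((fg n c χ i).1 v) := by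
  rw [diamondGraph, SimpleGraph.fromRel_adj, SimpleGraph.fromRel_adj]
  constructor
  · rintro ⟨hne, ⟨e, he⟩ | ⟨e, he⟩⟩
    · exact ⟨fun hh => hne ((fg_inj n c χ i).1 hh),
        Or.inl ⟨(fg n c χ i).2 e, by rw [fg_ends, he]⟩⟩
    · exact ⟨fun hh => hne ((fg_inj n c χ i).1 hh),
        Or.inr ⟨(fg n c χ i).2 e, by rw [fg_ends, he]⟩⟩
  · rintro ⟨hne, ⟨e, he⟩ | ⟨e, he⟩⟩
    · exact ⟨fun hh => hne (congrArg _ hh), Or.inl (fg_reflect n c χ i u v e he)⟩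
    · exact ⟨fun hh => hne (congrArg _ hh), Or.inr (fg_reflect n c χ i v u e he)⟩

lemma fg_branch : ∀ (j m : ℕ) (w : DVert (m+1+j)) (e' : DEdge m) (l : ℕ),
    (fg n c χ (m+1+j)).1 w = dEmb (m+1) j (Sum.inr (e', l)) →
    ∃ k, l = alpha n c χ m e' k := by
  intro j
  induction j with
  | zero =>
    rintro m (w1 | ⟨ew, kw⟩) e' l h
    · exact (Sum.inl_ne_inr (h.trans rfl)).elim
    · have h' : (((fg n c χ m).2 ew, alpha n c χ m ((fg n c χ m).2 ew) kw) : DEdge m × ℕ)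
          = (e', l) := Sum.inr_injective h
      have he : (fg n c χ m).2 ew = e' := congrArg Prod.fst h'
      have hl : alpha n c χ m ((fg n c χ m).2 ew) kw = l := congrArg Prod.snd h'
      exact ⟨kw, by rw [← hl, he]⟩
  | succ j ih =>
    rintro m (w1 | ⟨ew, kw⟩) e' l h
    · exact ih m w1 e' l (Sum.inl_injective h)
    · exact (Sum.inr_ne_inl (h.trans rfl)).elim

end Construction2


lemma height_dCast {a b : ℕ} (h : a = b) (v : DVert a) : height b (dCast h v) = height a v := by
  subst h; rfl

lemma dCast_inj {a b : ℕ} (h : a = b) {x y : DVert a} (hh : dCast h x = dCast h y) : x = y := by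
  subst h; exact hh

lemma fg_dCast (n c : ℕ) (χ : DVert n → DVert n → Fin c) {a b : ℕ} (h : a = b) (w : DVert b) :
    (fg n c χ b).1 w = dCast h ((fg n c χ a).1 (dCast h.symm w)) := by
  subst h; rfl

/-- **`D_n^ω` Coloring Lemma.**  Color the vertical vertex pairs of `D_n^ω` by `c` colors.
Then there is a subgraph `𝔇` of `D_n^ω` (the image of `φ`) graph isomorphic to `D_n^ω`
such that every `2^j`-scaled copy of `D_1^ω` (with `0 ≤ j ≤ n−1`) contained in `𝔇` is
horizontally monochromatic: vertical pairs of vertices of the copy at equal levels receive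
equal colors. -/
theorem diamond_coloring_lemma (n c : ℕ) (χ : DVert n → DVert n → Fin c) :
    ∃ φ : DVert n → DVert n, Function.Injective φ ∧
      (∀ u v : DVert n, (diamondGraph n).Adj u v ↔ (diamondGraph n).Adj (φ u) (φ v)) ∧
      ∀ (j m : ℕ) (hmn : m + 1 + j = n) (e : DEdge m) (ψ : ℕ → ℕ),
        Function.Injective ψ →
        copySet m j hmn e ψ ⊆ Set.range φ →
        ∀ a b u v : DVert n,
          a ∈ copySet m j hmn e ψ → b ∈ copySet m j hmn e ψ →
          u ∈ copySet m j hmn e ψ → v ∈ copySet m j hmn e ψ →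
          VP n a b → VP n u v →
          level n a = level n u → level n b = level n v →
          χ a b = χ u v := by
  refine ⟨(fg n c χ n).1, (fg_inj n c χ n).1, fg_adj n c χ n, ?_⟩
  intro j m hmn e ψ hψ hsub a b u v ha hb hu hv hab huv hla hlb
  have hj : j = n - m - 1 := by omega
  subst hj
  have hlevd : ∀ w : DVert (m+1),
      level n (dCast hmn (dEmb (m+1) (n-m-1) w)) = 2^(n-m-1) * height (m+1) w := by
    intro w
    rw [level_eq_height, height_dCast, height_dEmb]
  obtain ⟨p, hp, q, hS, hX, hT⟩ : ∃ p, 0 < p ∧ ∃ q,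
      level n (dCast hmn (copyS m (n-m-1) e)) = 2*q ∧
      (∀ k, level n (dCast hmn (copyX m (n-m-1) e k)) = 2*q + p) ∧
      level n (dCast hmn (copyT m (n-m-1) e)) = 2*q + 2*p := by
    refine ⟨2^(n-m-1), Nat.pow_pos (by norm_num),
      2^(n-m-1) * height m (dEnds m e).1, ?_, ?_, ?_⟩
    · refine (hlevd (Sum.inl (dEnds m e).1)).trans ?_
      have : height (m+1) (Sum.inl (dEnds m e).1 : DVert (m+1)) = 2 * height m (dEnds m e).1 := by
        simp [height]
      rw [this]; ring
    · intro k
      refine (hlevd (Sum.inr (e, k))).trans ?_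
      have : height (m+1) (Sum.inr (e, k) : DVert (m+1)) = 2 * height m (dEnds m e).1 + 1 := by
        simp [height]
      rw [this]; ring
    · refine (hlevd (Sum.inl (dEnds m e).2)).trans ?_
      have : height (m+1) (Sum.inl (dEnds m e).2 : DVert (m+1)) = 2 * height m (dEnds m e).1 + 2 := by
        simp [height, height_ends]
        omega
      rw [this]; ring
  have hkind : ∀ w, w ∈ copySet m (n-m-1) hmn e ψ →
      (w = dCast hmn (copyS m (n-m-1) e) ∧ level n w = 2*q) ∨
      (∃ k, w = dCast hmn (copyX m (n-m-1) e (ψ k)) ∧ level n w = 2*q + p) ∨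
      (w = dCast hmn (copyT m (n-m-1) e) ∧ level n w = 2*q + 2*p) := by
    rintro w (rfl | rfl | ⟨k, rfl⟩)
    · exact Or.inl ⟨rfl, hS⟩
    · exact Or.inr (Or.inr ⟨rfl, hT⟩)
    · exact Or.inr (Or.inl ⟨k, rfl, hX _⟩)
  have hrange : ∀ l, dCast hmn (copyX m (n-m-1) e l) ∈ Set.range (fg n c χ n).1 →
      ∃ k0, l = alpha n c χ m e k0 := by
    rintro l ⟨w, hw⟩
    have hw' : (fg n c χ (m+1+(n-m-1))).1 (dCast hmn.symm w) = copyX m (n-m-1) e l :=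
      dCast_inj hmn ((fg_dCast n c χ hmn w).symm.trans hw)
    exact fg_branch n c χ (n-m-1) m (dCast hmn.symm w) e l hw'
  have hconst : ∀ l1 l2, (∃ k, l1 = alpha n c χ m e k) → (∃ k, l2 = alpha n c χ m e k) →
      χ (dCast hmn (copyS m (n-m-1) e)) (dCast hmn (copyX m (n-m-1) e l1))
        = χ (dCast hmn (copyS m (n-m-1) e)) (dCast hmn (copyX m (n-m-1) e l2)) ∧
      χ (dCast hmn (copyX m (n-m-1) e l1)) (dCast hmn (copyT m (n-m-1) e))
        = χ (dCast hmn (copyX m (n-m-1) e l2)) (dCast hmn (copyT m (n-m-1) e)) := by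
    rintro l1 l2 ⟨k1, rfl⟩ ⟨k2, rfl⟩
    have hcp := alpha_const n c χ m e hmn k1 k2
    exact ⟨congrArg Prod.fst hcp, congrArg Prod.snd hcp⟩
  obtain ⟨hab1, -⟩ := hab
  obtain ⟨huv1, -⟩ := huv
  rcases hkind a ha with ⟨ha1,ha2⟩|⟨ka,ha1,ha2⟩|⟨ha1,ha2⟩ <;>
  rcases hkind b hb with ⟨hb1,hb2⟩|⟨kb,hb1,hb2⟩|⟨hb1,hb2⟩ <;>
  rcases hkind u hu with ⟨hu1,hu2⟩|⟨ku,hu1,hu2⟩|⟨hu1,hu2⟩ <;>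
  rcases hkind v hv with ⟨hv1,hv2⟩|⟨kv,hv1,hv2⟩|⟨hv1,hv2⟩ <;>
  first
  | omega
  | (rw [ha1, hb1, hu1, hv1]
     exact (hconst _ _ (hrange _ (hb1 ▸ hsub hb)) (hrange _ (hv1 ▸ hsub hv))).1)
  | (rw [ha1, hb1, hu1, hv1]
     exact (hconst _ _ (hrange _ (ha1 ▸ hsub ha)) (hrange _ (hu1 ▸ hsub hu))).2)
  | (rw [ha1, hb1, hu1, hv1])
end
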